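/- arXiv:2101.04765 — 2 statements merged into one kernel-verified Lean document; each statement's English description precedes it below -/
import Mathlib

section
/- The normalized projected Cook–Kress distance between two incomplete ratings is always between 0 and 1, provided each rating takes values in the interval [ℓ, u] with u > ℓ and the intersection of their domains has at least 2 elements. -/
/-!
Put `x i = a1 i - a2 i ∈ [ℓ - u, u - ℓ]`, so that the summand is `|x i - x j|`. By the
layer-cake formula, `|x i - x j|` is the length of the set of thresholds `t` lying between `x i`
and `x j`; for a fixed `t` the number of such ordered pairs is `2 k (m - k)` with
`k = #{i | x i ≤ t}`, which is at most `2 ⌈m/2⌉ ⌊m/2⌋`, and it vanishes for `t` outside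
`[ℓ - u, u - ℓ)`. Integrating over `t` bounds the double sum by `4 (u - ℓ) ⌈m/2⌉ ⌊m/2⌋ = C⁻¹`.
-/

open Finset MeasureTheory

theorem Nat.mul_le_ceil_half_mul_half_of_add_eq {k l m : ℕ} (h : k + l = m) :
    k * l ≤ (m + 1) / 2 * (m / 2) := by
  obtain ⟨q, rfl | rfl⟩ := Nat.even_or_odd' m
  · rw [show (2 * q + 1) / 2 = q by omega, show 2 * q / 2 = q by omega]
    nlinarith [sq_nonneg ((k : ℤ) - l)]
  · rw [show (2 * q + 1 + 1) / 2 = q + 1 by omega, show (2 * q + 1) / 2 = q by omega]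
    have : 1 ≤ ((k : ℤ) - l) ^ 2 := by
      nlinarith [Int.one_le_abs (show (k : ℤ) - l ≠ 0 by omega), sq_abs ((k : ℤ) - l)]
    nlinarith

theorem Finset.sum_sum_ite_iff_zero_one_eq {V : Type*} (S : Finset V) (p : V → Prop)
    [DecidablePred p] :
    ∑ i ∈ S, ∑ j ∈ S, (if (p i ↔ p j) then 0 else 1 : ℝ) =
      2 * #(S.filter p) * #(S.filter (¬p ·)) := by
  have row : ∀ i, ∑ j ∈ S, (if (p i ↔ p j) then 0 else 1 : ℝ) =
      if p i then (#(S.filter (¬p ·)) : ℝ) else #(S.filter p) := by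
    intro i
    by_cases hi : p i <;> simp [hi, sum_ite]
  rw [sum_congr rfl fun i _ => row i, sum_ite]
  simp only [sum_const, nsmul_eq_mul]
  ring

theorem indicator_Ico_min_max_apply (x y t : ℝ) :
    (Set.Ico (min x y) (max x y)).indicator 1 t = if (x ≤ t ↔ y ≤ t) then (0 : ℝ) else 1 := by
  simp only [Set.indicator_apply, Set.mem_Ico, min_le_iff, lt_max_iff, Pi.one_apply]
  split_ifs <;> grind

theorem abs_sub_eq_integral_indicator_Ico (x y : ℝ) :
    |x - y| = ∫ t, (Set.Ico (min x y) (max x y)).indicator 1 t := by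
  rw [integral_indicator_one measurableSet_Ico, Real.volume_real_Ico_of_le min_le_max,
    max_sub_min_eq_abs']

theorem Finset.sum_sum_indicator_Ico_min_max_le {V : Type*} (S : Finset V) {f : V → ℝ} {a b : ℝ}
    (hf : ∀ i ∈ S, f i ∈ Set.Icc a b) (t : ℝ) :
    ∑ i ∈ S, ∑ j ∈ S, (Set.Ico (min (f i) (f j)) (max (f i) (f j))).indicator 1 t ≤
      2 * (((#S + 1) / 2 * (#S / 2) : ℕ) : ℝ) * (Set.Ico a b).indicator 1 t := by
  simp only [indicator_Ico_min_max_apply]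
  by_cases ht : t ∈ Set.Ico a b
  · rw [Set.indicator_of_mem ht, Pi.one_apply, mul_one, S.sum_sum_ite_iff_zero_one_eq (f · ≤ t)]
    have := Nat.mul_le_ceil_half_mul_half_of_add_eq (S.card_filter_add_card_filter_not (f · ≤ t))
    rw [mul_assoc]
    exact_mod_cast Nat.mul_le_mul_left 2 this
  · have hconst : ∀ i ∈ S, ∀ j ∈ S, (f i ≤ t ↔ f j ≤ t) := by
      intro i hi j hj
      grind
    rw [Set.indicator_of_notMem ht, mul_zero]
    exact (sum_eq_zero fun i hi => sum_eq_zero fun j hj => if_pos (hconst i hi j hj)).le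

theorem integrable_indicator_Ico_one (x y : ℝ) :
    Integrable ((Set.Ico x y).indicator (1 : ℝ → ℝ)) :=
  (integrable_indicator_iff measurableSet_Ico).2 (integrableOn_const measure_Ico_lt_top.ne)

theorem Finset.sum_sum_abs_sub_le {V : Type*} (S : Finset V) {f : V → ℝ} {a b : ℝ}
    (hf : ∀ i ∈ S, f i ∈ Set.Icc a b) :
    ∑ i ∈ S, ∑ j ∈ S, |f i - f j| ≤ 2 * (((#S + 1) / 2 * (#S / 2) : ℕ) : ℝ) * (b - a) := by
  rcases S.eq_empty_or_nonempty with rfl | ⟨i, hi⟩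
  · simp
  have hab : a ≤ b := (hf i hi).1.trans (hf i hi).2
  calc ∑ i ∈ S, ∑ j ∈ S, |f i - f j|
      = ∫ t, ∑ i ∈ S, ∑ j ∈ S, (Set.Ico (min (f i) (f j)) (max (f i) (f j))).indicator 1 t := by
        rw [integral_finsetSum _ fun i _ => integrable_finsetSum _ fun j _ =>
          integrable_indicator_Ico_one _ _]
        simp_rw [integral_finsetSum _ fun j _ => integrable_indicator_Ico_one _ _,
          abs_sub_eq_integral_indicator_Ico]
    _ ≤ ∫ t, 2 * (((#S + 1) / 2 * (#S / 2) : ℕ) : ℝ) * (Set.Ico a b).indicator 1 t :=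
        integral_mono (integrable_finsetSum _ fun i _ => integrable_finsetSum _ fun j _ =>
          integrable_indicator_Ico_one _ _) ((integrable_indicator_Ico_one a b).const_mul _)
          (S.sum_sum_indicator_Ico_min_max_le hf)
    _ = 2 * (((#S + 1) / 2 * (#S / 2) : ℕ) : ℝ) * (b - a) := by
        rw [integral_const_mul, integral_indicator_one measurableSet_Ico,
          Real.volume_real_Ico_of_le hab]

theorem npck_mem_unit_interval_general {V : Type*} [DecidableEq V]
    (A1 A2 : Finset V) (a1 a2 : V → ℝ) (ℓ u : ℝ)
    (h1 : ∀ i ∈ A1, a1 i ∈ Set.Icc ℓ u) (h2 : ∀ i ∈ A2, a2 i ∈ Set.Icc ℓ u)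
    (S : Finset V) (hS : S = A1 ∩ A2)
    (m : ℕ) (hm : m = S.card)
    (C : ℝ) (hC : C = (4 * (u - ℓ) * ((m + 1) / 2 : ℕ) * ((m / 2 : ℕ) : ℝ))⁻¹)
    (d : ℝ)
    (hd : d = C * ∑ i ∈ S, ∑ j ∈ S, |(a1 i - a1 j) - (a2 i - a2 j)|) :
    0 ≤ d ∧ d ≤ 1 := by
  have hdiff : ∀ i ∈ S, a1 i - a2 i ∈ Set.Icc (ℓ - u) (u - ℓ) := by
    intro i hi
    rw [hS, mem_inter] at hi
    obtain ⟨hl1, hu1⟩ := h1 i hi.1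
    obtain ⟨hl2, hu2⟩ := h2 i hi.2
    constructor <;> linarith
  have hsum : ∑ i ∈ S, ∑ j ∈ S, |(a1 i - a1 j) - (a2 i - a2 j)| ≤
      4 * (u - ℓ) * ((m + 1) / 2 : ℕ) * ((m / 2 : ℕ) : ℝ) :=
    calc ∑ i ∈ S, ∑ j ∈ S, |(a1 i - a1 j) - (a2 i - a2 j)|
        = ∑ i ∈ S, ∑ j ∈ S, |(a1 i - a2 i) - (a1 j - a2 j)| := by
          simp only [sub_sub_sub_comm]
      _ ≤ 2 * (((#S + 1) / 2 * (#S / 2) : ℕ) : ℝ) * ((u - ℓ) - (ℓ - u)) :=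
        S.sum_sum_abs_sub_le hdiff
      _ = 4 * (u - ℓ) * ((m + 1) / 2 : ℕ) * ((m / 2 : ℕ) : ℝ) := by
        rw [hm]
        push_cast
        ring
  have hnonneg : 0 ≤ ∑ i ∈ S, ∑ j ∈ S, |(a1 i - a1 j) - (a2 i - a2 j)| :=
    sum_nonneg fun i _ => sum_nonneg fun j _ => abs_nonneg _
  subst hd hC
  exact ⟨mul_nonneg (inv_nonneg.2 (hnonneg.trans hsum)) hnonneg,
    inv_mul_le_one_of_le₀ hsum (hnonneg.trans hsum)⟩

/-- The normalized projected Cook–Kress distance lies in [0,1]. -/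
theorem npck_mem_unit_interval {V : Type*} [DecidableEq V]
    (A1 A2 : Finset V) (a1 a2 : V → ℝ) (ℓ u : ℝ) (hlu : ℓ < u)
    (h1 : ∀ i ∈ A1, a1 i ∈ Set.Icc ℓ u) (h2 : ∀ i ∈ A2, a2 i ∈ Set.Icc ℓ u)
    (S : Finset V) (hS : S = A1 ∩ A2)
    (m : ℕ) (hm : m = S.card) (hm2 : 2 ≤ m)
    (C : ℝ) (hC : C = (4 * (u - ℓ) * ((m + 1) / 2 : ℕ) * ((m / 2 : ℕ) : ℝ))⁻¹)
    (d : ℝ)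
    (hd : d = C * ∑ i ∈ S, ∑ j ∈ S, |(a1 i - a1 j) - (a2 i - a2 j)|) :
    0 ≤ d ∧ d ≤ 1 :=
  npck_mem_unit_interval_general A1 A2 a1 a2 ℓ u h1 h2 S hS m hm C hC d hd
end

section
/- For a complete ranking case with two judges ranking the same m ≥ 2 objects, m·(m-1)·d_NPKS(b¹, b²) equals twice the number of rank reversals plus the number of half reversals, i.e., 2·|{(i,j) : i<j, b¹ and b² strictly disagree on order}| + |{(i,j) : i<j, exactly one of b¹, b² ties i and j}|. -/
/-!
The summand `|sign (b¹ᵢ - b¹ⱼ) - sign (b²ᵢ - b²ⱼ)|` is symmetric in `(i, j)` and vanishes on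
the diagonal, so the double sum is twice the sum over `i < j`. On each such pair it equals `2`
for a strict reversal, `1` when exactly one judge ties `i` and `j`, and `0` otherwise.
-/

open Finset

theorem Real.abs_sign_sub_sign (x y : ℝ) :
    |Real.sign x - Real.sign y| =
      2 * (if Real.sign x = -Real.sign y ∧ Real.sign x ≠ 0 then 1 else 0) +
        (if Xor (x = 0) (y = 0) then 1 else 0) := by
  rcases lt_trichotomy x 0 with hx | rfl | hx <;>
  rcases lt_trichotomy y 0 with hy | rfl | hy <;>
  norm_num [Real.sign_of_neg, Real.sign_of_pos, *, Xor, ne_of_lt, ne_of_gt]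

theorem Finset.sum_sum_eq_two_nsmul_sum_lt {α M : Type*} [LinearOrder α] [AddCommMonoid M]
    (S : Finset α) (f : α → α → M) (hsymm : ∀ i j, f i j = f j i) (hdiag : ∀ i, f i i = 0) :
    ∑ i ∈ S, ∑ j ∈ S, f i j = 2 • ∑ p ∈ S ×ˢ S with p.1 < p.2, f p.1 p.2 := by
  have hsplit : ∀ i j, f i j = (if i < j then f i j else 0) + (if j < i then f i j else 0) := by
    intro i j
    rcases lt_trichotomy i j with h | rfl | h
    · simp [h, h.not_gt]
    · simp [hdiag]
    · simp [h, h.not_gt]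
  calc ∑ i ∈ S, ∑ j ∈ S, f i j
      = ∑ i ∈ S, ∑ j ∈ S, (if i < j then f i j else 0) +
          ∑ i ∈ S, ∑ j ∈ S, (if j < i then f i j else 0) := by
        rw [← sum_add_distrib]
        refine sum_congr rfl fun i _ => ?_
        rw [← sum_add_distrib]
        exact sum_congr rfl fun j _ => hsplit i j
    _ = ∑ i ∈ S, ∑ j ∈ S, (if i < j then f i j else 0) +
          ∑ i ∈ S, ∑ j ∈ S, (if i < j then f i j else 0) := by
        rw [sum_comm (f := fun i j => if j < i then f i j else 0)]
        simp only [hsymm]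
    _ = 2 • ∑ p ∈ S ×ˢ S with p.1 < p.2, f p.1 p.2 := by
        rw [← two_nsmul, sum_filter, sum_product]

theorem npks_counts_reversals_general {V : Type*} [LinearOrder V]
    (S : Finset V) (m : ℕ) (hm2 : 2 ≤ m)
    (b1 b2 : V → ℝ)
    (d : ℝ)
    (hd : d = ((m : ℝ) ^ 2 - m)⁻¹ * ∑ i ∈ S, ∑ j ∈ S,
        (1 / 2) * |Real.sign (b1 i - b1 j) - Real.sign (b2 i - b2 j)|) :
    (m : ℝ) * (m - 1) * d =
      2 * ((S ×ˢ S).filter (fun p => p.1 < p.2 ∧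
          Real.sign (b1 p.1 - b1 p.2) = -Real.sign (b2 p.1 - b2 p.2) ∧
          Real.sign (b1 p.1 - b1 p.2) ≠ 0)).card
      + ((S ×ˢ S).filter (fun p => p.1 < p.2 ∧
          Xor (b1 p.1 = b1 p.2) (b2 p.1 = b2 p.2))).card := by
  have hden : (m : ℝ) * (m - 1) ≠ 0 := by
    have : (2 : ℝ) ≤ m := by exact_mod_cast hm2
    nlinarith
  have hpairs := sum_sum_eq_two_nsmul_sum_lt S
    (fun i j => |Real.sign (b1 i - b1 j) - Real.sign (b2 i - b2 j)|)
    (fun i j => by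
      rw [← neg_sub (b1 i), ← neg_sub (b2 i), Real.sign_neg, Real.sign_neg, neg_sub_neg,
        abs_sub_comm])
    (fun i => by simp)
  simp only [← mul_sum] at hd
  rw [hd, show (m : ℝ) ^ 2 - m = m * (m - 1) by ring, ← mul_assoc, mul_inv_cancel₀ hden, one_mul,
    hpairs, nsmul_eq_mul, Nat.cast_ofNat, one_div, inv_mul_cancel_left₀ two_ne_zero,
    sum_congr rfl fun p _ => Real.abs_sign_sub_sign _ _]
  simp only [sum_add_distrib, ← mul_sum, sum_boole, filter_filter, sub_eq_zero]

/-- For complete rankings of the same `m ≥ 2` objects, `m(m-1)·d_NPKS` equals twice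
the number of strict rank reversals plus the number of half reversals. -/
theorem npks_counts_reversals {V : Type*} [DecidableEq V] [LinearOrder V]
    (S : Finset V) (m : ℕ) (hm : m = S.card) (hm2 : 2 ≤ m)
    (b1 b2 : V → ℝ)
    (d : ℝ)
    (hd : d = ((m : ℝ) ^ 2 - m)⁻¹ * ∑ i ∈ S, ∑ j ∈ S,
        (1 / 2) * |Real.sign (b1 i - b1 j) - Real.sign (b2 i - b2 j)|) :
    (m : ℝ) * (m - 1) * d =
      2 * ((S ×ˢ S).filter (fun p => p.1 < p.2 ∧
          Real.sign (b1 p.1 - b1 p.2) = -Real.sign (b2 p.1 - b2 p.2) ∧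
          Real.sign (b1 p.1 - b1 p.2) ≠ 0)).card
      + ((S ×ˢ S).filter (fun p => p.1 < p.2 ∧
          Xor (b1 p.1 = b1 p.2) (b2 p.1 = b2 p.2))).card :=
  npks_counts_reversals_general S m hm2 b1 b2 d hd
end
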